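/- arXiv:2401.03268 — 2 statements merged into one kernel-verified Lean document; each statement's English description precedes it below -/
import Mathlib

section
/- Let (Ω, F, P) be a probability space, let C be a {0,1}-valued random variable, let W* and D be random elements, and let π be a (0,1]-valued random variable that is measurable with respect to σ(W*, D). Suppose E[C | σ(W*, D)] = π almost surely. Then for any bounded real random variable Z measurable with respect to σ(W*), E[(C/π)·Z | σ(D)] = E[Z | σ(D)] almost surely. -/
open MeasureTheory

/-- Conditional unbiasedness of inverse probability weighting:
if `E[C | σ(W*,D)] = π` with `π` a `σ(W*,D)`-measurable `(0,1]`-valued weight,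
then for any bounded `σ(W*)`-measurable `Z`, `E[(C/π)·Z | σ(D)] = E[Z | σ(D)]` a.s. -/
theorem stmt0 {Ω : Type*} (mW mWD mD : MeasurableSpace Ω) {m0 : MeasurableSpace Ω} (μ : Measure Ω) [IsProbabilityMeasure μ]
    (hWD : mWD ≤ m0) (hW : mW ≤ mWD) (hD : mD ≤ mWD)
    (C π Z : Ω → ℝ)
    (hCmeas : Measurable C) (hC01 : ∀ ω, C ω = 0 ∨ C ω = 1)
    (hπmeas : Measurable[mWD] π)
    (hπpos : ∀ ω, 0 < π ω) (hπle : ∀ ω, π ω ≤ 1)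
    (hcond : μ[C | mWD] =ᵐ[μ] π)
    (hZmeas : Measurable[mW] Z) (hZbd : ∃ M : ℝ, ∀ ω, |Z ω| ≤ M)
    (hint : Integrable (fun ω => (C ω / π ω) * Z ω) μ) :
    μ[fun ω => (C ω / π ω) * Z ω | mD] =ᵐ[μ] μ[Z | mD] := by
  have hfeq : (fun ω => (C ω / π ω) * Z ω) = fun ω => (Z ω / π ω) * C ω := by
    funext ω; ring
  have hg : StronglyMeasurable[mWD] (fun ω => Z ω / π ω) :=
    ((hZmeas.mono hW le_rfl).div hπmeas).stronglyMeasurable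
  have hCint : Integrable C μ := by
    refine (integrable_const (1 : ℝ)).mono' (hCmeas.aestronglyMeasurable) ?_
    refine ae_of_all _ fun ω => ?_
    rcases hC01 ω with h | h <;> simp [h]
  have hint' : Integrable (fun ω => (Z ω / π ω) * C ω) μ := hfeq ▸ hint
  have hmul : μ[fun ω => (Z ω / π ω) * C ω | mWD]
      =ᵐ[μ] fun ω => (Z ω / π ω) * (μ[C | mWD]) ω :=
    condExp_mul_of_stronglyMeasurable_left hg hint' hCint
  have hZeq : μ[fun ω => (C ω / π ω) * Z ω | mWD] =ᵐ[μ] Z := by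
    rw [hfeq]
    refine hmul.trans ?_
    filter_upwards [hcond] with ω hω
    rw [hω, div_mul_cancel₀]
    exact (hπpos ω).ne'
  calc μ[fun ω => (C ω / π ω) * Z ω | mD]
      =ᵐ[μ] μ[μ[fun ω => (C ω / π ω) * Z ω | mWD] | mD] :=
        (condExp_condExp_of_le hD hWD).symm
    _ =ᵐ[μ] μ[Z | mD] := condExp_congr_ae hZeq
end

section
/- Let Y, C be random variables with C ∈ {0,1}, C ≤ 1, and suppose Y·C = Y*·C almost surely for some random variable Y* (consistency), π is a σ(Y*, D)-measurable random variable with values in (0,1] for a random element D, E[C | σ(Y*, D)] = π a.s., Y* is independent of σ(D), and E|Y*| < ∞. Then E[(C/π)·Y | σ(D)] = E[Y*] almost surely; in particular E[(C/π)·Y] = E[Y*]. -/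
open MeasureTheory ProbabilityTheory

/-- IPW identification of the value of a regime: with consistency `Y·C = Y*·C`,
`E[C | σ(Y*,D)] = π` for a `σ(Y*,D)`-measurable `(0,1]`-valued `π`, and `Y*`
independent of `σ(D)`, one has `E[(C/π)·Y | σ(D)] = E[Y*]` a.s., and in
particular `E[(C/π)·Y] = E[Y*]`. -/
theorem stmt6 {Ω : Type*} (mW mD : MeasurableSpace Ω) {m0 : MeasurableSpace Ω} (μ : Measure Ω) [IsProbabilityMeasure μ]
    (hW : mW ≤ m0) (hD : mD ≤ m0)
    (Y Ystar C π : Ω → ℝ)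
    (hYmeas : Measurable Y) (hCmeas : Measurable C)
    (hYstarmeas : Measurable[mW] Ystar)
    (hC01 : ∀ ω, C ω = 0 ∨ C ω = 1)
    (hcons : ∀ᵐ ω ∂μ, Y ω * C ω = Ystar ω * C ω)
    (hπmeas : Measurable[mW ⊔ mD] π)
    (hπpos : ∀ ω, 0 < π ω) (hπle : ∀ ω, π ω ≤ 1)
    (hcond : μ[C | mW ⊔ mD] =ᵐ[μ] π)
    (hindep : Indep mW mD μ)
    (hYstarint : Integrable Ystar μ)
    (hint : Integrable (fun ω => (C ω / π ω) * Y ω) μ) :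
    (μ[fun ω => (C ω / π ω) * Y ω | mD] =ᵐ[μ] fun _ => ∫ ω, Ystar ω ∂μ) ∧
      ∫ ω, (C ω / π ω) * Y ω ∂μ = ∫ ω, Ystar ω ∂μ := by
  have hWD : mW ⊔ mD ≤ m0 := sup_le hW hD
  set f : Ω → ℝ := fun ω => Ystar ω / π ω with hf
  have hfmeas : StronglyMeasurable[mW ⊔ mD] f :=
    ((hYstarmeas.mono le_sup_left le_rfl).div hπmeas).stronglyMeasurable
  -- a.e. equality of (C/π)*Y with f*C
  have haeq : (fun ω => (C ω / π ω) * Y ω) =ᵐ[μ] f * C := by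
    filter_upwards [hcons] with ω hω
    simp only [f, Pi.mul_apply]
    rw [div_mul_eq_mul_div, div_mul_eq_mul_div, mul_comm (C ω) (Y ω), hω,
      mul_comm (Ystar ω) (C ω)]
  have hfCint : Integrable (f * C) μ := hint.congr haeq
  have hCint : Integrable C μ := by
    refine Integrable.mono' (integrable_const (1 : ℝ))
      (by exact (hCmeas.aestronglyMeasurable)) ?_
    filter_upwards with ω
    rcases hC01 ω with h | h <;> simp [h]
  -- pull-out property
  have hpull : μ[f * C | mW ⊔ mD] =ᵐ[μ] f * μ[C | mW ⊔ mD] :=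
    condExp_mul_of_stronglyMeasurable_left hfmeas hfCint hCint
  have hstep : μ[fun ω => (C ω / π ω) * Y ω | mW ⊔ mD] =ᵐ[μ] Ystar := by
    refine (condExp_congr_ae haeq).trans (hpull.trans ?_)
    filter_upwards [hcond] with ω hω
    simp only [Pi.mul_apply, f, hω]
    rw [div_mul_eq_mul_div, mul_div_assoc, div_self (hπpos ω).ne', mul_one]
  -- tower property
  have htower : μ[fun ω => (C ω / π ω) * Y ω | mD] =ᵐ[μ] μ[Ystar | mD] := by
    have h1 : μ[μ[fun ω => (C ω / π ω) * Y ω | mW ⊔ mD] | mD]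
        =ᵐ[μ] μ[fun ω => (C ω / π ω) * Y ω | mD] :=
      condExp_condExp_of_le le_sup_right hWD
    exact h1.symm.trans (condExp_congr_ae hstep)
  have hindepeq : μ[Ystar | mD] =ᵐ[μ] fun _ => ∫ ω, Ystar ω ∂μ :=
    condExp_indep_eq hW hD hYstarmeas.stronglyMeasurable hindep
  have hmain := htower.trans hindepeq
  refine ⟨hmain, ?_⟩
  have h2 := integral_condExp hD (μ := μ) (f := fun ω => (C ω / π ω) * Y ω)
  rw [← h2, integral_congr_ae hmain]
  simp
end
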